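/- Assume every hospital's preference is substitutable and let φ̄ be the doctor-optimal rule. Then for every doctor d, every preference P_d and every preference P'_d, the P_d-worst element of d's option set under truth-telling is weakly P_d-preferred to the P_d-worst element of d's option set under the report P'_d: W_d(P_d, O^{φ̄}(P_d)) R_d W_d(P_d, O^{φ̄}(P'_d)). -/

import Mathlib

set_option linter.unusedSectionVars false

namespace Matching

open Finset

/-- A many-to-one matching market with contracts: each contract `x` involves exactly one
doctor `xD x` and one hospital `xH x`; each hospital `h` has a fixed antisymmetric,
transitive and complete preference `prH h`, modelled as a linear order on sets of
contracts (only its comparisons between allocations of contracts involving `h` matter). -/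
structure Market (D H X : Type*) where
  xD : X → D
  xH : X → H
  prH : H → LinearOrder (Finset X)

/-- A doctor's preference: an antisymmetric, transitive and complete preference, modelled
as a linear order on sets of contracts (only comparisons between `∅` and singletons of
contracts involving the doctor matter). -/
abbrev Pref (X : Type*) := LinearOrder (Finset X)

/-- A profile of doctors' preferences. -/
abbrev Profile (D X : Type*) := D → Pref X

variable {D H X : Type*}
variable [DecidableEq D] [DecidableEq H] [DecidableEq X] [Fintype D] [Fintype H] [Fintype X]

/-- `Y_d` : the contracts in `Y` involving doctor `d`. -/
def docPart (M : Market D H X) (Y : Finset X) (d : D) : Finset X :=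
  Y.filter fun x => M.xD x = d

/-- `Y_h` : the contracts in `Y` involving hospital `h`. -/
def hospPart (M : Market D H X) (Y : Finset X) (h : H) : Finset X :=
  Y.filter fun x => M.xH x = h

/-- An allocation: distinct contracts involve distinct doctors. -/
def IsAllocation (M : Market D H X) (Z : Finset X) : Prop :=
  ∀ x ∈ Z, ∀ y ∈ Z, M.xD x = M.xD y → x = y

/-- `A(Y)` : the allocations contained in `Y`. -/
def allocs (M : Market D H X) (Y : Finset X) : Finset (Finset X) :=
  Y.powerset.filter fun Z => ∀ x ∈ Z, ∀ y ∈ Z, M.xD x = M.xD y → x = y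

lemma empty_mem_allocs (M : Market D H X) (Y : Finset X) : ∅ ∈ allocs M Y := by
  simp [allocs]

/-- The best allocation contained in `Y` according to the linear order `pr`. -/
def bestAlloc (M : Market D H X) (pr : Pref X) (Y : Finset X) : Finset X :=
  @Finset.max' _ pr (allocs M Y) ⟨∅, empty_mem_allocs M Y⟩

/-- `C_h(Y)` : hospital `h`'s choice set from `Y` (the `≻_h`-maximum of `A(Y_h)`). -/
def Ch (M : Market D H X) (h : H) (Y : Finset X) : Finset X :=
  bestAlloc M (M.prH h) (hospPart M Y h)

/-- `C_d(P_d, Y)` : doctor `d`'s choice set from `Y` (the `P_d`-maximum of `A(Y_d)`). -/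
def Cd (M : Market D H X) (Pd : Pref X) (d : D) (Y : Finset X) : Finset X :=
  bestAlloc M Pd (docPart M Y d)

/-- `C_H(Y) = ∪_{h ∈ H} C_h(Y)`. -/
def CH (M : Market D H X) (Y : Finset X) : Finset X :=
  univ.biUnion fun h => Ch M h Y

/-- `C_D(Y) = ∪_{d ∈ D} C_d(Y)`. -/
def CD (M : Market D H X) (P : Profile D X) (Y : Finset X) : Finset X :=
  univ.biUnion fun d => Cd M (P d) d Y

/-- Substitutability of hospital `h`'s preference: `x ∈ C_h(W)` and `x ∈ Y_h ⊆ W_h`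
imply `x ∈ C_h(Y)`. -/
def Substitutable (M : Market D H X) (h : H) : Prop :=
  ∀ W Y : Finset X, hospPart M Y h ⊆ hospPart M W h →
    ∀ x ∈ hospPart M Y h, x ∈ Ch M h W → x ∈ Ch M h Y

/-- The sets `X^t` of still-available contracts in the doctor-proposing deferred
acceptance algorithm (0-based: index `t` corresponds to iteration `t+1`). -/
def DDAsets (M : Market D H X) (P : Profile D X) : ℕ → Finset X
  | 0 => univ
  | t + 1 =>
      DDAsets M P t \ (CD M P (DDAsets M P t) \ CH M (CD M P (DDAsets M P t)))

/-- `O^t` : the offers made by the doctors at iteration `t` of D-DA (0-based). -/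
def offers (M : Market D H X) (P : Profile D X) (t : ℕ) : Finset X :=
  CD M P (DDAsets M P t)

/-- `O_A^t = ∪_{k ≤ t} O^k` : the accumulated offers up to iteration `t` (0-based). -/
def accOffers (M : Market D H X) (P : Profile D X) (t : ℕ) : Finset X :=
  (Finset.range (t + 1)).biUnion fun k => offers M P k

/-- D-DA has stopped at iteration `t`: all offers are accepted. -/
def DDAstopped (M : Market D H X) (P : Profile D X) (t : ℕ) : Prop :=
  CH M (offers M P t) = offers M P t

/-- The (0-based) last iteration of D-DA, i.e. `T - 1` where `T` is the number of
iterations of D-DA. -/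
noncomputable def DDAlast (M : Market D H X) (P : Profile D X) : ℕ :=
  sInf {t | DDAstopped M P t}

/-- The output of D-DA (the algorithm provably stops by iteration `Fintype.card X`,
and once stopped the offer sets stay constant). -/
def DDAoutput (M : Market D H X) (P : Profile D X) : Finset X :=
  CH M (offers M P (Fintype.card X))

/-- The doctor-optimal rule `φ̄`, giving doctor `d`'s outcome `φ̄_d(P)` (an element of
`A(𝐗_d)`, i.e. `∅` or a singleton). -/
def docOpt (M : Market D H X) (P : Profile D X) (d : D) : Finset X :=
  docPart M (DDAoutput M P) d

/-- The sets `X^t` of still-available contracts in the hospital-proposing deferred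
acceptance algorithm (0-based). -/
def HDAsets (M : Market D H X) (P : Profile D X) : ℕ → Finset X
  | 0 => univ
  | t + 1 =>
      HDAsets M P t \ (CH M (HDAsets M P t) \ CD M P (CH M (HDAsets M P t)))

/-- The offers made by the hospitals at iteration `t` of H-DA (0-based). -/
def hOffers (M : Market D H X) (P : Profile D X) (t : ℕ) : Finset X :=
  CH M (HDAsets M P t)

/-- The output of H-DA. -/
def HDAoutput (M : Market D H X) (P : Profile D X) : Finset X :=
  CD M P (hOffers M P (Fintype.card X))

/-- The hospital-optimal rule `φ̲`, giving doctor `d`'s outcome `φ̲_d(P)`. -/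
def hospOpt (M : Market D H X) (P : Profile D X) (d : D) : Finset X :=
  docPart M (HDAoutput M P) d

/-- The option set `O^φ(P_d)` left open by `P_d` at the rule `φ`. -/
def optionSet (rule : Profile D X → D → Finset X) (d : D) (Pd : Pref X) :
    Set (Finset X) :=
  {S | ∃ P : Profile D X, P d = Pd ∧ S = rule P d}

open scoped Classical in
/-- `W_d(pr, S)` : the `pr`-worst element of the (finite) set `S` of outcomes. -/
noncomputable def worstIn (pr : Pref X) (S : Set (Finset X)) : Finset X :=
  if h : S.Nonempty then
    @Finset.min' _ pr (Set.toFinite S).toFinset ((Set.Finite.toFinset_nonempty _).mpr h)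
  else ∅

open scoped Classical in
/-- The `pr`-best element of the (finite) set `S` of outcomes. -/
noncomputable def bestIn (pr : Pref X) (S : Set (Finset X)) : Finset X :=
  if h : S.Nonempty then
    @Finset.max' _ pr (Set.toFinite S).toFinset ((Set.Finite.toFinset_nonempty _).mpr h)
  else ∅

/-- `P'_d` is a manipulation of the rule at `P_d` : for some subprofile of the other
doctors, reporting `P'_d` gives a strictly `P_d`-better outcome than truth-telling. -/
def IsManip (rule : Profile D X → D → Finset X) (d : D) (Pd P'd : Pref X) : Prop :=
  ∃ P : Profile D X, P d = Pd ∧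
    Pd.lt (rule P d) (rule (Function.update P d P'd) d)

/-- `P'_d` is an obvious manipulation of the rule at `P_d`. -/
def IsObviousManip (rule : Profile D X → D → Finset X) (d : D) (Pd P'd : Pref X) :
    Prop :=
  IsManip rule d Pd P'd ∧
    (Pd.lt (worstIn Pd (optionSet rule d Pd)) (worstIn Pd (optionSet rule d P'd)) ∨
     Pd.lt (bestIn Pd (optionSet rule d Pd)) (bestIn Pd (optionSet rule d P'd)))

/-- A rule is not obviously manipulable (NOM). -/
def NOM (rule : Profile D X → D → Finset X) : Prop :=
  ∀ (d : D) (Pd P'd : Pref X), ¬ IsObviousManip rule d Pd P'd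

/-- A rule is obviously manipulable (OM). -/
def OM (rule : Profile D X → D → Finset X) : Prop :=
  ∃ (d : D) (Pd P'd : Pref X), IsObviousManip rule d Pd P'd

/-- `Y` is a stable allocation at the profile `P` : it is an individually rational
allocation and admits no blocking contract. -/
def IsStable (M : Market D H X) (P : Profile D X) (Y : Finset X) : Prop :=
  IsAllocation M Y ∧ CD M P Y = Y ∧ CH M Y = Y ∧
    ∀ x : X, x ∉ Y →
      ¬ (x ∈ Cd M (P (M.xD x)) (M.xD x) (insert x Y) ∧
         x ∈ Ch M (M.xH x) (insert x Y))

/-- `⌈kq⌉` where `k` is the number of stable allocations at `P`. -/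
noncomputable def quantileIndex (M : Market D H X) (P : Profile D X) (q : ℝ) : ℕ :=
  ⌈(Set.ncard {Y : Finset X | IsStable M P Y} : ℝ) * q⌉₊

/-- `Z` is doctor `d`'s `⌈kq⌉`-th best outcome (according to `P d`) among the `k` stable
allocations at `P` : it is the outcome of some stable allocation, strictly fewer than
`⌈kq⌉` stable allocations give `d` a strictly better outcome, and at least `⌈kq⌉` stable
allocations give `d` a weakly better outcome. -/
def IsQuantileOutcome (M : Market D H X) (P : Profile D X) (q : ℝ) (d : D)
    (Z : Finset X) : Prop :=
  (∃ Y : Finset X, IsStable M P Y ∧ docPart M Y d = Z) ∧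
    Set.ncard {Y : Finset X | IsStable M P Y ∧ (P d).lt Z (docPart M Y d)} <
      quantileIndex M P q ∧
    quantileIndex M P q ≤
      Set.ncard {Y : Finset X | IsStable M P Y ∧ (P d).le Z (docPart M Y d)}
/-!
Let `μ` be `d`'s worst outcome under truth-telling, attained at a profile `P`. If `d`
truncates her preference just above `μ`, the D-DA runs at `P` and at the truncated profile
coincide as long as `d` still has a contract she prefers to `μ` available, so in the end all
those contracts are rejected. Substitutability keeps a rejected contract rejected against the
final offers `B`, an allocation not involving `d`. Now let `d` report anything and let every
other doctor accept only her contract in `B`: each contract of `B` is then held or rejected,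
so a contract `x` that `d` obtains is chosen by its hospital from `B ∪ {x}`. Hence `d` obtains
no contract she prefers to `μ`, and `∅` is no better than `μ` by individual rationality.
-/

namespace Pref

omit [DecidableEq X] [Fintype X]

variable {pr : Pref X} {a b c : Finset X}

protected lemma le_refl (a : Finset X) : pr.le a a := @le_refl _ pr.toPreorder a

protected lemma le_trans (hab : pr.le a b) (hbc : pr.le b c) : pr.le a c :=
  @le_trans _ pr.toPreorder a b c hab hbc

protected lemma le_antisymm (hab : pr.le a b) (hba : pr.le b a) : a = b :=
  @le_antisymm _ pr.toPartialOrder a b hab hba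

protected lemma lt_of_lt_of_le (hab : pr.lt a b) (hbc : pr.le b c) : pr.lt a c :=
  @lt_of_lt_of_le _ pr.toPreorder a b c hab hbc

protected lemma not_lt : ¬ pr.lt a b ↔ pr.le b a := @not_lt _ pr a b

end Pref

section Choice

variable {M : Market D H X}

omit [DecidableEq H] [DecidableEq X] [Fintype D] [Fintype H] [Fintype X] in
lemma mem_docPart {Y : Finset X} {d : D} {x : X} :
    x ∈ docPart M Y d ↔ x ∈ Y ∧ M.xD x = d := mem_filter

omit [DecidableEq D] [DecidableEq X] [Fintype D] [Fintype H] [Fintype X] in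
lemma mem_hospPart {Y : Finset X} {h : H} {x : X} :
    x ∈ hospPart M Y h ↔ x ∈ Y ∧ M.xH x = h := mem_filter

section Allocations

omit [DecidableEq H] [Fintype D] [Fintype H]

lemma mem_allocs {Y Z : Finset X} : Z ∈ allocs M Y ↔ Z ⊆ Y ∧ IsAllocation M Z := by
  simp [allocs, IsAllocation]

lemma allocs_mono {Y W : Finset X} (h : Y ⊆ W) : allocs M Y ⊆ allocs M W :=
  fun _ hZ => mem_allocs.2 ⟨(mem_allocs.1 hZ).1.trans h, (mem_allocs.1 hZ).2⟩

lemma singleton_mem_allocs_docPart {Y : Finset X} {d : D} {x : X} (hx : x ∈ Y)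
    (hxd : M.xD x = d) : {x} ∈ allocs M (docPart M Y d) :=
  mem_allocs.2 ⟨singleton_subset_iff.2 (mem_docPart.2 ⟨hx, hxd⟩), by
    simp [IsAllocation]⟩

lemma mem_allocs_docPart {Y Z : Finset X} {d : D} (hZ : Z ∈ allocs M (docPart M Y d)) :
    Z = ∅ ∨ ∃ x ∈ Y, M.xD x = d ∧ Z = {x} := by
  obtain ⟨hZY, hZ⟩ := mem_allocs.1 hZ
  obtain rfl | ⟨x, hx⟩ := Z.eq_empty_or_nonempty
  · exact Or.inl rfl
  obtain ⟨hxY, hxd⟩ := mem_docPart.1 (hZY hx)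
  refine Or.inr ⟨x, hxY, hxd, eq_singleton_iff_unique_mem.2 ⟨hx, fun y hy => ?_⟩⟩
  exact hZ y hy x hx ((mem_docPart.1 (hZY hy)).2.trans hxd.symm)

end Allocations

lemma bestAlloc_mem (pr : Pref X) (Y : Finset X) : bestAlloc M pr Y ∈ allocs M Y :=
  @max'_mem _ pr _ _

lemma le_bestAlloc (pr : Pref X) {Y Z : Finset X} (hZ : Z ∈ allocs M Y) :
    pr.le Z (bestAlloc M pr Y) :=
  @le_max' _ pr _ _ hZ

lemma bestAlloc_eq_of_forall_le {pr : Pref X} {Y Z : Finset X} (hZ : Z ∈ allocs M Y)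
    (hmax : ∀ W ∈ allocs M Y, pr.le W Z) : bestAlloc M pr Y = Z :=
  Pref.le_antisymm (hmax _ (bestAlloc_mem pr Y)) (le_bestAlloc pr hZ)

lemma bestAlloc_eq_of_subset {pr : Pref X} {Y W : Finset X} (hYW : Y ⊆ W)
    (hW : bestAlloc M pr W ⊆ Y) : bestAlloc M pr Y = bestAlloc M pr W :=
  bestAlloc_eq_of_forall_le (mem_allocs.2 ⟨hW, (mem_allocs.1 (bestAlloc_mem pr W)).2⟩)
    fun _ hV => le_bestAlloc pr (allocs_mono hYW hV)

lemma mem_Ch {h : H} {Y : Finset X} {x : X} (hx : x ∈ Ch M h Y) : x ∈ Y ∧ M.xH x = h :=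
  mem_hospPart.1 ((mem_allocs.1 (bestAlloc_mem _ _)).1 hx)

lemma Ch_subset (h : H) (Y : Finset X) : Ch M h Y ⊆ Y := fun _ hx => (mem_Ch hx).1

lemma Ch_eq_of_subset {h : H} {Y W : Finset X} (hYW : Y ⊆ W) (hW : Ch M h W ⊆ Y) :
    Ch M h Y = Ch M h W :=
  bestAlloc_eq_of_subset (filter_subset_filter _ hYW)
    fun _ hx => mem_hospPart.2 ⟨hW hx, (mem_Ch hx).2⟩

lemma Ch_insert_of_notMem {h : H} {Y : Finset X} {x : X} (hx : x ∉ Ch M h (insert x Y)) :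
    Ch M h (insert x Y) = Ch M h Y := by
  refine (Ch_eq_of_subset (subset_insert x Y) fun y hy => ?_).symm
  obtain rfl | hyY := mem_insert.1 (Ch_subset h _ hy)
  · exact absurd hy hx
  · exact hyY

lemma Substitutable.mem_Ch_of_subset {h : H} (hs : Substitutable M h) {Y W : Finset X}
    {x : X} (hYW : Y ⊆ W) (hxY : x ∈ Y) (hxW : x ∈ Ch M h W) : x ∈ Ch M h Y :=
  hs W Y (filter_subset_filter _ hYW) x (mem_hospPart.2 ⟨hxY, (mem_Ch hxW).2⟩) hxW

lemma Substitutable.notMem_Ch_insert {h : H} (hs : Substitutable M h) {W W' : Finset X}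
    {x : X} (hx : x ∉ Ch M h (insert x W)) (hW' : Ch M h W ⊆ W') :
    x ∉ Ch M h (insert x W') := by
  have hirc := Ch_insert_of_notMem hx
  have hchoice : Ch M h (insert x (Ch M h W)) = Ch M h (insert x W) :=
    Ch_eq_of_subset (insert_subset_insert x (Ch_subset h W)) (hirc ▸ subset_insert _ _)
  intro hx'
  apply hx
  rw [← hchoice]
  exact hs.mem_Ch_of_subset (insert_subset_insert x hW') (mem_insert_self x _) hx'

lemma Substitutable.Ch_union_eq {h : H} (hs : Substitutable M h) {W : Finset X}
    (R : Finset X) (hR : ∀ y ∈ R, y ∉ Ch M h (insert y W)) : Ch M h (W ∪ R) = Ch M h W := by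
  induction R using Finset.induction_on with
  | empty => rw [union_empty]
  | insert y R _ ih =>
    have hy : y ∉ Ch M h (insert y (W ∪ R)) :=
      hs.notMem_Ch_insert (hR y (mem_insert_self y R))
        ((Ch_subset h W).trans subset_union_left)
    rw [union_insert, Ch_insert_of_notMem hy]
    exact ih fun y' hy' => hR y' (mem_insert_of_mem hy')

lemma Substitutable.mem_Ch_insert {h : H} (hs : Substitutable M h) {W B : Finset X}
    {x : X} (hx : x ∈ Ch M h W) (hB : ∀ y ∈ B, y ∉ W → y ∉ Ch M h (insert y W)) :
    x ∈ Ch M h (insert x B) := by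
  have hunion : Ch M h (W ∪ B \ W) = Ch M h W :=
    hs.Ch_union_eq _ fun y hy => hB y (mem_sdiff.1 hy).1 (mem_sdiff.1 hy).2
  refine hs.mem_Ch_of_subset ?_ (mem_insert_self x B) (hunion ▸ hx)
  rw [union_sdiff_self_eq_union]
  exact insert_subset (mem_union_left _ (Ch_subset h W hx)) subset_union_right

lemma Cd_mem_allocs (pr : Pref X) (d : D) (Y : Finset X) :
    Cd M pr d Y ∈ allocs M (docPart M Y d) := bestAlloc_mem _ _

lemma le_Cd (pr : Pref X) {d : D} {Y Z : Finset X} (hZ : Z ∈ allocs M (docPart M Y d)) :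
    pr.le Z (Cd M pr d Y) := le_bestAlloc pr hZ

lemma empty_le_Cd (pr : Pref X) (d : D) (Y : Finset X) : pr.le ∅ (Cd M pr d Y) :=
  le_Cd pr (empty_mem_allocs M _)

lemma Cd_eq_empty_or_singleton (pr : Pref X) (d : D) (Y : Finset X) :
    Cd M pr d Y = ∅ ∨ ∃ x ∈ Y, M.xD x = d ∧ Cd M pr d Y = {x} :=
  mem_allocs_docPart (Cd_mem_allocs pr d Y)

lemma mem_Cd {pr : Pref X} {d : D} {Y : Finset X} {x : X} (hx : x ∈ Cd M pr d Y) :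
    x ∈ Y ∧ M.xD x = d :=
  mem_docPart.1 ((mem_allocs.1 (Cd_mem_allocs pr d Y)).1 hx)

lemma Cd_eq_singleton_of_mem {pr : Pref X} {d : D} {Y : Finset X} {x : X}
    (hx : x ∈ Cd M pr d Y) : Cd M pr d Y = {x} := by
  obtain hCd | ⟨c, -, -, hCd⟩ := Cd_eq_empty_or_singleton (M := M) pr d Y
  · simp [hCd] at hx
  · rw [hCd, mem_singleton] at hx
    rw [hCd, hx]

lemma Cd_eq_of_subset {pr : Pref X} {d : D} {Y W : Finset X} (hYW : Y ⊆ W)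
    (hW : Cd M pr d W ⊆ Y) : Cd M pr d Y = Cd M pr d W :=
  bestAlloc_eq_of_subset (filter_subset_filter _ hYW)
    fun _ hx => mem_docPart.2 ⟨hW hx, (mem_Cd hx).2⟩

lemma exists_Cd_eq_singleton_of_lt {pr : Pref X} {d : D} {Y z : Finset X} {a : X}
    (hz : pr.le ∅ z) (ha : a ∈ Y) (had : M.xD a = d) (hza : pr.lt z {a}) :
    ∃ c, Cd M pr d Y = {c} ∧ pr.lt z {c} := by
  have hzCd := Pref.lt_of_lt_of_le hza (le_Cd pr (singleton_mem_allocs_docPart ha had))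
  obtain hCd | ⟨c, -, -, hCd⟩ := Cd_eq_empty_or_singleton (M := M) pr d Y
  · rw [hCd] at hzCd
    exact absurd hzCd (Pref.not_lt.2 hz)
  · exact ⟨c, hCd, hCd ▸ hzCd⟩

end Choice

section DeferredAcceptance

variable {M : Market D H X}

lemma docPart_CD (P : Profile D X) (Y : Finset X) (d : D) :
    docPart M (CD M P Y) d = Cd M (P d) d Y := by
  ext x
  simp only [mem_docPart, CD, mem_biUnion, mem_univ, true_and]
  constructor
  · rintro ⟨⟨j, hj⟩, rfl⟩
    rwa [(mem_Cd hj).2]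
  · exact fun hx => ⟨⟨d, hx⟩, (mem_Cd hx).2⟩

lemma mem_CD {P : Profile D X} {Y : Finset X} {x : X} :
    x ∈ CD M P Y ↔ x ∈ Cd M (P (M.xD x)) (M.xD x) Y := by
  rw [← docPart_CD, mem_docPart, and_iff_left rfl]

lemma CD_subset (P : Profile D X) (Y : Finset X) : CD M P Y ⊆ Y :=
  fun _ hx => (mem_Cd (mem_CD.1 hx)).1

lemma isAllocation_CD (P : Profile D X) (Y : Finset X) : IsAllocation M (CD M P Y) := by
  intro x hx y hy hxy
  have hx' := mem_CD.1 hx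
  rw [hxy, Cd_eq_singleton_of_mem (mem_CD.1 hy)] at hx'
  exact mem_singleton.1 hx'

lemma CD_update_eq {P : Profile D X} {d : D} {pr : Pref X} {Y : Finset X}
    (h : Cd M pr d Y = Cd M (P d) d Y) : CD M (Function.update P d pr) Y = CD M P Y := by
  refine biUnion_congr rfl fun j _ => ?_
  obtain rfl | hj := eq_or_ne j d
  · rw [Function.update_self, h]
  · rw [Function.update_of_ne hj]

lemma mem_CH {Y : Finset X} {x : X} : x ∈ CH M Y ↔ x ∈ Ch M (M.xH x) Y := by
  simp only [CH, mem_biUnion, mem_univ, true_and]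
  exact ⟨fun ⟨_, hx⟩ => (mem_Ch hx).2 ▸ hx, fun hx => ⟨_, hx⟩⟩

lemma CH_subset (Y : Finset X) : CH M Y ⊆ Y := fun _ hx => Ch_subset _ _ (mem_CH.1 hx)

variable (P : Profile D X)

lemma DDAsets_succ (t : ℕ) :
    DDAsets M P (t + 1) = DDAsets M P t \ (offers M P t \ CH M (offers M P t)) := rfl

lemma offers_subset_DDAsets (t : ℕ) : offers M P t ⊆ DDAsets M P t := CD_subset _ _

lemma DDAsets_succ_subset (t : ℕ) : DDAsets M P (t + 1) ⊆ DDAsets M P t := sdiff_subset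

lemma mem_offers_of_mem_DDAsets_of_notMem_succ {t : ℕ} {x : X} (hx : x ∈ DDAsets M P t)
    (hx' : x ∉ DDAsets M P (t + 1)) : x ∈ offers M P t ∧ x ∉ CH M (offers M P t) := by
  rw [DDAsets_succ, mem_sdiff] at hx'
  simpa [hx] using hx'

lemma CH_offers_subset_offers_succ (t : ℕ) : CH M (offers M P t) ⊆ offers M P (t + 1) := by
  intro x hx
  have hxO := CH_subset _ hx
  have hx' : x ∈ DDAsets M P (t + 1) := by
    rw [DDAsets_succ, mem_sdiff, mem_sdiff]
    exact ⟨offers_subset_DDAsets P t hxO, fun h => h.2 hx⟩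
  have hCd := Cd_eq_singleton_of_mem (mem_CD.1 hxO)
  rw [offers, mem_CD,
    Cd_eq_of_subset (DDAsets_succ_subset P t) (hCd ▸ singleton_subset_iff.2 hx'), hCd]
  exact mem_singleton_self x

lemma DDAstopped.DDAsets_succ {P : Profile D X} {t : ℕ} (h : DDAstopped M P t) :
    DDAsets M P (t + 1) = DDAsets M P t := by
  rw [Matching.DDAsets_succ, h, sdiff_self, sdiff_bot]

lemma DDAstopped.mono {P : Profile D X} {s t : ℕ} (h : DDAstopped M P s) (hst : s ≤ t) :
    DDAstopped M P t := by
  induction t, hst using Nat.le_induction with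
  | base => exact h
  | succ t _ ih => rwa [DDAstopped, offers, ih.DDAsets_succ]

lemma DDAsets_succ_ssubset {t : ℕ} (h : ¬ DDAstopped M P t) :
    DDAsets M P (t + 1) ⊂ DDAsets M P t :=
  sdiff_ssubset (sdiff_subset.trans (offers_subset_DDAsets P t))
    (sdiff_nonempty.2 fun hsub => h ((CH_subset _).antisymm hsub))

lemma card_DDAsets_add_le {t : ℕ} (h : ∀ s < t, ¬ DDAstopped M P s) :
    #(DDAsets M P t) + t ≤ Fintype.card X := by
  induction t with
  | zero => exact card_le_univ _
  | succ t ih =>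
    have hlt := card_lt_card (DDAsets_succ_ssubset P (h t t.lt_succ_self))
    have := ih fun s hs => h s (hs.trans t.lt_succ_self)
    omega

/-- Every iteration of D-DA that does not stop removes a contract. -/
lemma DDAstopped_card : DDAstopped M P (Fintype.card X) := by
  by_contra h
  have := card_DDAsets_add_le P (t := Fintype.card X + 1) fun s hs hstop =>
    h (hstop.mono (Nat.lt_succ_iff.1 hs))
  omega

lemma docOpt_eq_Cd (d : D) : docOpt M P d = Cd M (P d) d (DDAsets M P (Fintype.card X)) := by
  rw [docOpt, DDAoutput, DDAstopped_card P, offers, docPart_CD]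

lemma empty_le_docOpt (d : D) : (P d).le ∅ (docOpt M P d) :=
  (docOpt_eq_Cd (M := M) P d).symm ▸ empty_le_Cd (P d) d _

lemma docOpt_eq_empty_or_singleton (d : D) :
    docOpt M P d = ∅ ∨ ∃ x, M.xD x = d ∧ docOpt M P d = {x} := by
  rw [docOpt_eq_Cd]
  obtain h | ⟨x, -, hxd, h⟩ := Cd_eq_empty_or_singleton (M := M) (P d) d (DDAsets M P _)
  exacts [Or.inl h, Or.inr ⟨x, hxd, h⟩]

lemma notMem_Ch_insert_offers (hsub : ∀ h : H, Substitutable M h) {t : ℕ} {x : X}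
    (hx : x ∉ DDAsets M P t) : x ∉ Ch M (M.xH x) (insert x (offers M P t)) := by
  induction t with
  | zero => exact absurd (mem_univ x) hx
  | succ t ih =>
    have hrejected : x ∉ Ch M (M.xH x) (insert x (offers M P t)) := by
      by_cases hxt : x ∈ DDAsets M P t
      · obtain ⟨hxO, hxCH⟩ := mem_offers_of_mem_DDAsets_of_notMem_succ P hxt hx
        rwa [insert_eq_of_mem hxO, ← mem_CH]
      · exact ih hxt
    exact (hsub _).notMem_Ch_insert hrejected
      (fun y hy => CH_offers_subset_offers_succ P t (mem_CH.2 ((mem_Ch hy).2 ▸ hy)))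

end DeferredAcceptance

section Truncation

variable {M : Market D H X}

open scoped Classical in
noncomputable def acceptTier (acc : X → Prop) (S : Finset X) : ℕ :=
  if ∃ x, S = {x} ∧ acc x then 2 else if S = ∅ then 1 else 0

lemma acceptTier_empty (acc : X → Prop) : acceptTier acc ∅ = 1 := by
  simp [acceptTier]

lemma acceptTier_singleton_of_acc {acc : X → Prop} {x : X} (hx : acc x) :
    acceptTier acc {x} = 2 := by
  simp [acceptTier, hx]

lemma acceptTier_singleton_of_not_acc {acc : X → Prop} {x : X} (hx : ¬ acc x) :
    acceptTier acc {x} = 0 := by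
  simp [acceptTier, hx]

/-- The preference ranking the singletons `{x}` with `acc x` first (among themselves as `pr`
does), then `∅`, then everything else. -/
noncomputable abbrev truncate (pr : Pref X) (acc : X → Prop) : Pref X :=
  @LinearOrder.lift' (Finset X) (ℕ ×ₗ Finset X) (@Prod.Lex.instLinearOrder ℕ (Finset X) _ pr)
    (fun S => toLex (acceptTier acc S, S)) fun _ _ h => congrArg (fun p => (ofLex p).2) h

lemma truncate_le_iff {pr : Pref X} {acc : X → Prop} {S T : Finset X} :
    (truncate pr acc).le S T ↔
      acceptTier acc S < acceptTier acc T ∨ acceptTier acc S = acceptTier acc T ∧ pr.le S T :=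
  @Prod.Lex.le_iff ℕ (Finset X) _ pr.toLE (acceptTier acc S, S) (acceptTier acc T, T)

variable {pr : Pref X} {acc : X → Prop} {d : D} {Y : Finset X} {c : X}

lemma Cd_truncate_eq_empty (h : ∀ x ∈ Y, M.xD x = d → ¬ acc x) :
    Cd M (truncate pr acc) d Y = ∅ :=
  bestAlloc_eq_of_forall_le (empty_mem_allocs M _) fun W hW => by
    obtain rfl | ⟨x, hx, hxd, rfl⟩ := mem_allocs_docPart hW
    · exact truncate_le_iff.2 (Or.inr ⟨rfl, Pref.le_refl _⟩)
    · rw [truncate_le_iff, acceptTier_singleton_of_not_acc (h x hx hxd), acceptTier_empty]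
      exact Or.inl one_pos

lemma Cd_truncate_eq_singleton (hc : c ∈ Y) (hcd : M.xD c = d) (hacc : acc c)
    (hmax : ∀ x ∈ Y, M.xD x = d → acc x → pr.le {x} {c}) :
    Cd M (truncate pr acc) d Y = {c} :=
  bestAlloc_eq_of_forall_le (singleton_mem_allocs_docPart hc hcd) fun W hW => by
    rw [truncate_le_iff, acceptTier_singleton_of_acc hacc]
    obtain rfl | ⟨x, hx, hxd, rfl⟩ := mem_allocs_docPart hW
    · rw [acceptTier_empty]
      exact Or.inl one_lt_two
    · by_cases hxacc : acc x
      · rw [acceptTier_singleton_of_acc hxacc]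
        exact Or.inr ⟨rfl, hmax x hx hxd hxacc⟩
      · rw [acceptTier_singleton_of_not_acc hxacc]
        exact Or.inl two_pos

lemma Cd_truncate_of_eq_singleton (h : Cd M pr d Y = {c}) (hacc : acc c) :
    Cd M (truncate pr acc) d Y = {c} :=
  have hc := mem_Cd (h ▸ mem_singleton_self c)
  Cd_truncate_eq_singleton hc.1 hc.2 hacc fun _ hx hxd _ =>
    h ▸ le_Cd pr (singleton_mem_allocs_docPart hx hxd)

noncomputable abbrev truncateAbove (P : Profile D X) (d : D) (z : Finset X) : Profile D X :=
  Function.update P d (truncate (P d) fun x => (P d).lt z {x})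

/-- While `d` still has a contract better than `z` available, truncating above `z` does not
change her choice, so the two runs coincide. -/
lemma DDAsets_truncateAbove_eq_or (P : Profile D X) {z : Finset X} (hz : (P d).le ∅ z)
    (t : ℕ) :
    DDAsets M (truncateAbove P d z) t = DDAsets M P t ∨
      ∀ a, M.xD a = d → (P d).lt z {a} → a ∉ DDAsets M (truncateAbove P d z) t := by
  induction t with
  | zero => exact Or.inl rfl
  | succ t ih =>
    obtain heq | hrej := ih
    · by_cases havail : ∃ a ∈ DDAsets M (truncateAbove P d z) t, M.xD a = d ∧ (P d).lt z {a}
      · obtain ⟨a, ha, had, hza⟩ := havail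
        obtain ⟨c, hCd, hzc⟩ := exists_Cd_eq_singleton_of_lt hz (heq ▸ ha) had hza
        have hoffers : offers M (truncateAbove P d z) t = offers M P t := by
          rw [offers, offers, heq, truncateAbove,
            CD_update_eq ((Cd_truncate_of_eq_singleton hCd hzc).trans hCd.symm)]
        left
        rw [DDAsets_succ, DDAsets_succ, hoffers, heq]
      · exact Or.inr fun a had hza ha =>
          havail ⟨a, DDAsets_succ_subset _ t ha, had, hza⟩
    · exact Or.inr fun a had hza ha => hrej a had hza (DDAsets_succ_subset _ t ha)

lemma notMem_DDAsets_truncateAbove_docOpt (P : Profile D X) {a : X} (had : M.xD a = d)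
    (hlt : (P d).lt (docOpt M P d) {a}) :
    a ∉ DDAsets M (truncateAbove P d (docOpt M P d)) (Fintype.card X) := by
  obtain heq | hrej :=
    DDAsets_truncateAbove_eq_or (M := M) P (empty_le_docOpt (M := M) P d) (Fintype.card X)
  · intro ha
    rw [heq] at ha
    have hle := le_Cd (M := M) (P d) (singleton_mem_allocs_docPart ha had)
    rw [← docOpt_eq_Cd] at hle
    exact Pref.not_lt.2 hle hlt
  · exact hrej a had hlt

/-- `B` is the final offer set of the run in which `d` truncates just above her outcome. -/
lemma exists_blocking_allocation (hsub : ∀ h : H, Substitutable M h) (P : Profile D X)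
    (d : D) :
    ∃ B, IsAllocation M B ∧ docPart M B d = ∅ ∧
      ∀ x, M.xD x = d → (P d).lt (docOpt M P d) {x} → x ∉ Ch M (M.xH x) (insert x B) := by
  refine ⟨offers M (truncateAbove P d (docOpt M P d)) (Fintype.card X), isAllocation_CD _ _, ?_,
    fun x hxd hlt =>
      notMem_Ch_insert_offers _ hsub (notMem_DDAsets_truncateAbove_docOpt P hxd hlt)⟩
  rw [offers, docPart_CD, truncateAbove, Function.update_self]
  exact Cd_truncate_eq_empty fun x hx hxd hlt =>
    notMem_DDAsets_truncateAbove_docOpt P hxd hlt hx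

/-- The other doctors accept only their contract in `B`. -/
lemma exists_docOpt_mem_Ch_insert (hsub : ∀ h : H, Substitutable M h) {B : Finset X}
    (hB : IsAllocation M B) (hBd : docPart M B d = ∅) (pr : Pref X) :
    ∃ P : Profile D X, P d = pr ∧ ∀ x ∈ docOpt M P d, x ∈ Ch M (M.xH x) (insert x B) := by
  set P := Function.update (fun _ => truncate pr (· ∈ B)) d pr with hP
  refine ⟨P, Function.update_self _ _ _, fun x hx => ?_⟩
  have hheld : ∀ y ∈ B, y ∉ offers M P (Fintype.card X) →
      y ∉ DDAsets M P (Fintype.card X) := by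
    intro y hyB hyO hy
    have hyd : M.xD y ≠ d := fun h => notMem_empty y (hBd ▸ mem_docPart.2 ⟨hyB, h⟩)
    apply hyO
    rw [offers, mem_CD, hP, Function.update_of_ne hyd,
      Cd_truncate_eq_singleton hy rfl hyB fun x _ hxd hxB => hB x hxB y hyB hxd ▸ Pref.le_refl _]
    exact mem_singleton_self y
  have hxCh : x ∈ Ch M (M.xH x) (offers M P (Fintype.card X)) :=
    mem_CH.1 (mem_docPart.1 hx).1
  exact (hsub _).mem_Ch_insert hxCh fun y hyB hyO hyCh =>
    notMem_Ch_insert_offers P hsub (hheld y hyB hyO) ((mem_Ch hyCh).2 ▸ hyCh)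

end Truncation

omit [DecidableEq X] in
lemma worstIn_mem (pr : Pref X) {S : Set (Finset X)} (h : S.Nonempty) : worstIn pr S ∈ S := by
  rw [worstIn, dif_pos h]
  exact (Set.Finite.mem_toFinset _).1 (@min'_mem _ pr _ _)

omit [DecidableEq X] in
lemma worstIn_le (pr : Pref X) {S : Set (Finset X)} {Z : Finset X} (hZ : Z ∈ S) :
    pr.le (worstIn pr S) Z := by
  rw [worstIn, dif_pos ⟨Z, hZ⟩]
  exact @min'_le _ pr _ _ ((Set.Finite.mem_toFinset _).2 hZ)

/-- Under substitutability, for the doctor-optimal rule, truth-telling maximizes the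
worst-case outcome: `W_d(P_d, O^{φ̄}(P_d)) R_d W_d(P_d, O^{φ̄}(P'_d))` for all `P'_d`. -/
theorem docOpt_worst_truth_best (M : Market D H X) (hsub : ∀ h : H, Substitutable M h) :
    ∀ (d : D) (Pd P'd : Pref X),
      Pd.le (worstIn Pd (optionSet (docOpt M) d P'd))
        (worstIn Pd (optionSet (docOpt M) d Pd)) := by
  intro d Pd P'd
  obtain ⟨P, rfl, hworst⟩ :=
    worstIn_mem Pd (S := optionSet (docOpt M) d Pd) ⟨_, fun _ => Pd, rfl, rfl⟩
  obtain ⟨B, hB, hBd, hblock⟩ := exists_blocking_allocation hsub P d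
  obtain ⟨Q, hQd, hQ⟩ := exists_docOpt_mem_Ch_insert hsub hB hBd P'd
  refine Pref.le_trans (worstIn_le _ ⟨Q, hQd, rfl⟩) ?_
  rw [hworst]
  obtain hQ0 | ⟨x, hxd, hQx⟩ := docOpt_eq_empty_or_singleton (M := M) Q d
  · rw [hQ0]
    exact empty_le_docOpt P d
  · rw [hQx] at hQ ⊢
    exact Pref.not_lt.1 fun hlt => hblock x hxd hlt (hQ x (mem_singleton_self x))

end Matching
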